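/- A Laurent polynomial L in D variables is 'nice' — meaning ℓ(LM) = ℓ(L) + ℓ(M) for every nonzero Laurent polynomial M — if and only if for every subset σ ⊆ {1,…,D}, the intersection of the Newton polytope NP(L) with the closed orthant determined by σ (coordinates in σ nonpositive, coordinates outside σ nonnegative) contains a point of longitude (ℓ¹-norm) equal to ℓ(L). -/

import Mathlib

/-- The longitude of a Laurent polynomial: the maximum of `|α| = ∑ᵢ|αᵢ|` over its support. -/
noncomputable def longitude {D : ℕ} (L : AddMonoidAlgebra ℂ (Fin D → ℤ)) : ℕ :=
  L.coeff.support.sup fun α => ∑ i, (α i).natAbs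

/-- The Newton polytope of a Laurent polynomial: the convex hull in `ℝ^D` of its support. -/
noncomputable def newtonPolytope (D : ℕ) (L : AddMonoidAlgebra ℂ (Fin D → ℤ)) :
    Set (Fin D → ℝ) :=
  convexHull ℝ ((fun (α : Fin D → ℤ) (i : Fin D) => (α i : ℝ)) '' (L.coeff.support : Set (Fin D → ℤ)))

noncomputable instance lexPiLO (D : ℕ) : LinearOrder (Lex (Fin D → ℤ)) :=
  inferInstance

instance lexPiLOACG (D : ℕ) : IsOrderedCancelAddMonoid (Lex (Fin D → ℤ)) :=
  inferInstance

namespace NiceAux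

variable {D : ℕ}

/-- The signed linear functional attached to an orthant `σ`. -/
def psi (σ : Finset (Fin D)) (γ : Fin D → ℤ) : ℤ := ∑ i, if i ∈ σ then -(γ i) else γ i

lemma psi_add (σ : Finset (Fin D)) (a b : Fin D → ℤ) :
    psi σ (a + b) = psi σ a + psi σ b := by
  unfold psi
  rw [← Finset.sum_add_distrib]
  refine Finset.sum_congr rfl fun i _ => ?_
  by_cases h : i ∈ σ <;> simp [h, Pi.add_apply] <;> ring

lemma psi_le (σ : Finset (Fin D)) (γ : Fin D → ℤ) :
    psi σ γ ≤ ∑ i, ((γ i).natAbs : ℤ) := by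
  refine Finset.sum_le_sum fun i _ => ?_
  by_cases h : i ∈ σ <;> simp only [if_pos, if_neg, h, ite_true, ite_false] <;> omega

lemma psi_eq (σ : Finset (Fin D)) (γ : Fin D → ℤ) (h1 : ∀ i ∈ σ, γ i ≤ 0)
    (h2 : ∀ i ∉ σ, 0 ≤ γ i) : psi σ γ = ∑ i, ((γ i).natAbs : ℤ) := by
  refine Finset.sum_congr rfl fun i _ => ?_
  by_cases h : i ∈ σ
  · have := h1 i h; simp only [h, ite_true]; omega
  · have := h2 i h; simp only [h, ite_false]; omega

lemma le_longitude {L : AddMonoidAlgebra ℂ (Fin D → ℤ)} {a : Fin D → ℤ} (ha : a ∈ L.coeff.support) :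
    ∑ i, (a i).natAbs ≤ longitude L := by unfold longitude; exact Finset.le_sup (f := fun a => ∑ i, (a i).natAbs) ha

lemma psi_le_longitude (σ : Finset (Fin D)) {L : AddMonoidAlgebra ℂ (Fin D → ℤ)}
    {a : Fin D → ℤ} (ha : a ∈ L.coeff.support) : psi σ a ≤ (longitude L : ℤ) :=
  (psi_le σ a).trans (by exact_mod_cast le_longitude ha)

lemma lex_cancel {G : Type*} [AddCommGroup G] [LinearOrder G] [IsOrderedCancelAddMonoid G] {a b c d : G} (h1 : a ≤ c) (h2 : b ≤ d)
    (h3 : a + b = c + d) : a = c ∧ b = d := by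
  have hac : a = c := by
    by_contra hne
    exact absurd h3 (ne_of_lt (add_lt_add_of_lt_of_le (lt_of_le_of_ne h1 hne) h2))
  subst hac
  exact ⟨rfl, add_left_cancel h3⟩


lemma exists_lattice (σ : Finset (Fin D)) (L : AddMonoidAlgebra ℂ (Fin D → ℤ))
    (x : Fin D → ℝ) (hx : x ∈ newtonPolytope D L) (h1 : ∀ i ∈ σ, x i ≤ 0)
    (h2 : ∀ i ∉ σ, 0 ≤ x i) (h3 : ∑ i, |x i| = (longitude L : ℝ)) :
    ∃ a ∈ L.coeff.support, (∀ i ∈ σ, a i ≤ 0) ∧ (∀ i ∉ σ, 0 ≤ a i) ∧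
      ∑ i, (a i).natAbs = longitude L := by
  rw [newtonPolytope, convexHull_eq] at hx
  obtain ⟨ι, t, w, z, hw0, hw1, hz, hcm⟩ := hx
  rw [Finset.centerMass_eq_of_sum_1 _ _ hw1] at hcm
  set n : ℝ := (longitude L : ℝ) with hn
  have hxi : ∀ i, x i = ∑ j ∈ t, w j * z j i := by
    intro i
    rw [← hcm]
    simp [Finset.sum_apply]
  have hcast : ∀ j ∈ t, ∃ a ∈ L.coeff.support, (∀ i, z j i = (a i : ℝ)) := by
    intro j hj
    obtain ⟨a, haS, hae⟩ := hz j hj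
    exact ⟨a, Finset.mem_coe.mp haS, fun i => by rw [← hae]⟩
  have habs : ∀ (a : Fin D → ℤ) (i : Fin D), ((a i).natAbs : ℝ) = |(a i : ℝ)| := by
    intro a i
    rw [Nat.cast_natAbs, Int.cast_abs]
  have hzsum : ∀ j ∈ t, ∑ i, |z j i| ≤ n := by
    intro j hj
    obtain ⟨a, haL, hae⟩ := hcast j hj
    calc ∑ i, |z j i| = ∑ i, ((a i).natAbs : ℝ) := by
          refine Finset.sum_congr rfl fun i _ => ?_
          rw [hae i, habs]
      _ = ((∑ i, (a i).natAbs : ℕ) : ℝ) := by push_cast; rfl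
      _ ≤ n := by rw [hn]; exact_mod_cast le_longitude haL
  have key1 : ∀ i, |x i| ≤ ∑ j ∈ t, w j * |z j i| := by
    intro i
    rw [hxi i]
    refine (Finset.abs_sum_le_sum_abs _ _).trans ?_
    refine Finset.sum_le_sum fun j hj => ?_
    rw [abs_mul, abs_of_nonneg (hw0 j hj)]
  have key2 : ∑ i, ∑ j ∈ t, w j * |z j i| = ∑ j ∈ t, w j * ∑ i, |z j i| := by
    rw [Finset.sum_comm]
    exact Finset.sum_congr rfl fun j _ => (Finset.mul_sum _ _ _).symm
  have key3 : ∑ j ∈ t, w j * ∑ i, |z j i| ≤ n := by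
    calc ∑ j ∈ t, w j * ∑ i, |z j i| ≤ ∑ j ∈ t, w j * n :=
          Finset.sum_le_sum fun j hj => mul_le_mul_of_nonneg_left (hzsum j hj) (hw0 j hj)
      _ = n := by rw [← Finset.sum_mul, hw1, one_mul]
  have hAB : ∑ i, |x i| ≤ ∑ i, ∑ j ∈ t, w j * |z j i| :=
    Finset.sum_le_sum fun i _ => key1 i
  have hEqTotal : ∑ i, ∑ j ∈ t, w j * |z j i| = n :=
    le_antisymm (key2 ▸ key3) (h3 ▸ hAB)
  have perI : ∀ i, |x i| = ∑ j ∈ t, w j * |z j i| := by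
    have heq : ∑ i, |x i| = ∑ i, ∑ j ∈ t, w j * |z j i| := h3.trans hEqTotal.symm
    intro i
    exact (Finset.sum_eq_sum_iff_of_le fun i _ => key1 i).mp heq i (Finset.mem_univ i)
  have perJ : ∀ j ∈ t, w j * ∑ i, |z j i| = w j * n := by
    have heq : ∑ j ∈ t, w j * ∑ i, |z j i| = ∑ j ∈ t, w j * n := by
      rw [← key2, hEqTotal, ← Finset.sum_mul, hw1, one_mul]
    exact fun j hj => (Finset.sum_eq_sum_iff_of_le fun j hj =>
      mul_le_mul_of_nonneg_left (hzsum j hj) (hw0 j hj)).mp heq j hj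
  have hjpos : ∃ j ∈ t, 0 < w j := by
    by_contra hcon
    push_neg at hcon
    have : ∑ j ∈ t, w j ≤ 0 := Finset.sum_nonpos hcon
    linarith
  obtain ⟨j₀, hj₀t, hj₀⟩ := hjpos
  obtain ⟨a, haL, hae⟩ := hcast j₀ hj₀t
  have hsumj0 : ∑ i, |z j₀ i| = n := mul_left_cancel₀ (ne_of_gt hj₀) (perJ j₀ hj₀t)
  have hneg : ∀ i ∈ σ, z j₀ i ≤ 0 := by
    intro i hi
    have hxile : x i ≤ 0 := h1 i hi
    have h0 : ∑ j ∈ t, w j * (|z j i| + z j i) = 0 := by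
      have : ∑ j ∈ t, w j * (|z j i| + z j i)
          = (∑ j ∈ t, w j * |z j i|) + ∑ j ∈ t, w j * z j i := by
        rw [← Finset.sum_add_distrib]
        exact Finset.sum_congr rfl fun j _ => by ring
      rw [this, ← perI i, ← hxi i, abs_of_nonpos hxile]
      ring
    have hterm := (Finset.sum_eq_zero_iff_of_nonneg fun j hj =>
      mul_nonneg (hw0 j hj) (by linarith [neg_abs_le (z j i)])).mp h0 j₀ hj₀t
    have := mul_eq_zero.mp hterm
    rcases this with h | h
    · linarith
    · linarith [abs_nonneg (z j₀ i), le_abs_self (z j₀ i), neg_abs_le (z j₀ i), h]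
  have hpos : ∀ i ∉ σ, 0 ≤ z j₀ i := by
    intro i hi
    have hxile : 0 ≤ x i := h2 i hi
    have h0 : ∑ j ∈ t, w j * (|z j i| - z j i) = 0 := by
      have : ∑ j ∈ t, w j * (|z j i| - z j i)
          = (∑ j ∈ t, w j * |z j i|) - ∑ j ∈ t, w j * z j i := by
        rw [← Finset.sum_sub_distrib]
        exact Finset.sum_congr rfl fun j _ => by ring
      rw [this, ← perI i, ← hxi i, abs_of_nonneg hxile]
      ring
    have hterm := (Finset.sum_eq_zero_iff_of_nonneg fun j hj =>
      mul_nonneg (hw0 j hj) (by linarith [le_abs_self (z j i)])).mp h0 j₀ hj₀t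
    have := mul_eq_zero.mp hterm
    rcases this with h | h
    · linarith
    · linarith [abs_nonneg (z j₀ i), h]
  refine ⟨a, haL, fun i hi => ?_, fun i hi => ?_, ?_⟩
  · have := hneg i hi
    rw [hae i] at this
    exact_mod_cast this
  · have := hpos i hi
    rw [hae i] at this
    exact_mod_cast this
  · have : ((∑ i, (a i).natAbs : ℕ) : ℝ) = n := by
      rw [← hsumj0]
      push_cast
      exact Finset.sum_congr rfl fun i _ => by rw [hae i, habs]
    rw [hn] at this
    exact_mod_cast this


lemma nice_of_orth (L : AddMonoidAlgebra ℂ (Fin D → ℤ)) (hL : L ≠ 0)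
    (Horth : ∀ σ : Finset (Fin D), ∃ a ∈ L.coeff.support, (∀ i ∈ σ, a i ≤ 0) ∧
      (∀ i ∉ σ, 0 ≤ a i) ∧ ∑ i, (a i).natAbs = longitude L)
    (M : AddMonoidAlgebra ℂ (Fin D → ℤ)) (hM : M ≠ 0) :
    longitude (L * M) = longitude L + longitude M := by
  classical
  refine le_antisymm ?_ ?_
  · unfold longitude
    refine Finset.sup_le fun γ hγ => ?_
    obtain ⟨a, ha, b, hb, rfl⟩ := Finset.mem_add.mp (AddMonoidAlgebra.support_coeff_mul_subset L M hγ)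
    calc ∑ i, ((a + b) i).natAbs ≤ ∑ i, ((a i).natAbs + (b i).natAbs) :=
          Finset.sum_le_sum fun i _ => Int.natAbs_add_le _ _
      _ = (∑ i, (a i).natAbs) + ∑ i, (b i).natAbs := Finset.sum_add_distrib
      _ ≤ _ := add_le_add (Finset.le_sup (f := fun a => ∑ i, (a i).natAbs) ha) (Finset.le_sup (f := fun a => ∑ i, (a i).natAbs) hb)
  · -- pick a maximal-longitude element of M's support
    obtain ⟨β', hβ'M, hβ'⟩ := Finset.exists_mem_eq_sup M.coeff.support
      (Finsupp.support_nonempty_iff.mpr (AddMonoidAlgebra.coeff_eq_zero.not.mpr hM)) (fun b => ∑ i, (b i).natAbs)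
    have hβ'long : ∑ i, (β' i).natAbs = longitude M := hβ'.symm
    set σ : Finset (Fin D) := Finset.univ.filter (fun i => β' i < 0) with hσ
    obtain ⟨α', hα'L, hα'1, hα'2, hα'3⟩ := Horth σ
    set S : Finset (Fin D → ℤ) := L.coeff.support.filter (fun a => psi σ a = (longitude L : ℤ))
      with hS
    set T : Finset (Fin D → ℤ) := M.coeff.support.filter (fun b => psi σ b = (longitude M : ℤ))
      with hT
    have hα'S : α' ∈ S := by
      rw [hS, Finset.mem_filter]
      refine ⟨hα'L, ?_⟩
      rw [psi_eq σ α' hα'1 hα'2, ← hα'3]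
      push_cast
      rfl
    have hβ'T : β' ∈ T := by
      rw [hT, Finset.mem_filter]
      refine ⟨hβ'M, ?_⟩
      have e1 : ∀ i ∈ σ, β' i ≤ 0 := fun i hi =>
        le_of_lt ((Finset.mem_filter.mp hi).2)
      have e2 : ∀ i ∉ σ, 0 ≤ β' i := by
        intro i hi
        rw [hσ, Finset.mem_filter] at hi
        push_neg at hi
        exact hi (Finset.mem_univ i)
      rw [psi_eq σ β' e1 e2, ← hβ'long]
      push_cast
      rfl
    have hSne : S.Nonempty := ⟨α', hα'S⟩
    have hTne : T.Nonempty := ⟨β', hβ'T⟩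
    obtain ⟨α₀, hα₀S, hα₀max⟩ := Finset.exists_max_image S
      (fun a : Fin D → ℤ => (toLex a : Lex (Fin D → ℤ))) hSne
    obtain ⟨β₀, hβ₀T, hβ₀max⟩ := Finset.exists_max_image T
      (fun a : Fin D → ℤ => (toLex a : Lex (Fin D → ℤ))) hTne
    obtain ⟨hα₀L, hα₀ψ⟩ := Finset.mem_filter.mp hα₀S
    obtain ⟨hβ₀M, hβ₀ψ⟩ := Finset.mem_filter.mp hβ₀T
    -- the coefficient of L*M at α₀+β₀ is L α₀ * M β₀
    have hpair : ∀ a ∈ L.coeff.support, ∀ b ∈ M.coeff.support, a + b = α₀ + β₀ → a = α₀ ∧ b = β₀ := by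
      intro a ha b hb heq
      have h1 : psi σ a ≤ (longitude L : ℤ) := psi_le_longitude σ ha
      have h2 : psi σ b ≤ (longitude M : ℤ) := psi_le_longitude σ hb
      have h3 : psi σ a + psi σ b = (longitude L : ℤ) + (longitude M : ℤ) := by
        rw [← psi_add, heq, psi_add, hα₀ψ, hβ₀ψ]
      have h4 : psi σ a = (longitude L : ℤ) := by linarith
      have h5 : psi σ b = (longitude M : ℤ) := by linarith
      have haS : a ∈ S := Finset.mem_filter.mpr ⟨ha, h4⟩
      have hbT : b ∈ T := Finset.mem_filter.mpr ⟨hb, h5⟩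
      have hlex : toLex a + toLex b = toLex α₀ + toLex β₀ := congrArg toLex heq
      have := lex_cancel (hα₀max a haS) (hβ₀max b hbT) hlex
      exact ⟨congrArg ofLex this.1, congrArg ofLex this.2⟩
    have hcoef : (L * M).coeff (α₀ + β₀) = L.coeff α₀ * M.coeff β₀ := by
      rw [AddMonoidAlgebra.coeff_mul]
      simp only [Finsupp.sum]
      rw [Finset.sum_eq_single_of_mem α₀ hα₀L (fun a ha hne =>
        Finset.sum_eq_zero fun b hb => if_neg fun heq => hne (hpair a ha b hb heq).1)]
      rw [Finset.sum_eq_single_of_mem β₀ hβ₀M (fun b hb hne =>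
        if_neg fun heq => hne (add_left_cancel heq))]
      rw [if_pos rfl]
    have hmem : α₀ + β₀ ∈ (L * M).coeff.support := Finsupp.mem_support_iff.mpr (by
      rw [hcoef]
      exact mul_ne_zero (Finsupp.mem_support_iff.mp hα₀L) (Finsupp.mem_support_iff.mp hβ₀M))
    have hfin : (longitude L : ℤ) + (longitude M : ℤ) ≤ (longitude (L * M) : ℤ) := by
      calc (longitude L : ℤ) + (longitude M : ℤ) = psi σ (α₀ + β₀) := by
            rw [psi_add, hα₀ψ, hβ₀ψ]
        _ ≤ ∑ i, (((α₀ + β₀) i).natAbs : ℤ) := psi_le σ _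
        _ ≤ (longitude (L * M) : ℤ) := by exact_mod_cast le_longitude hmem
    exact_mod_cast hfin


lemma orth_of_nice (L : AddMonoidAlgebra ℂ (Fin D → ℤ)) (hL : L ≠ 0)
    (hnice : ∀ M : AddMonoidAlgebra ℂ (Fin D → ℤ), M ≠ 0 →
      longitude (L * M) = longitude L + longitude M) (σ : Finset (Fin D)) :
    ∃ a ∈ L.coeff.support, (∀ i ∈ σ, a i ≤ 0) ∧ (∀ i ∉ σ, 0 ≤ a i) ∧
      ∑ i, (a i).natAbs = longitude L := by
  classical
  set c : ℤ := (longitude L : ℤ) + 1 with hc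
  set β : Fin D → ℤ := fun i => if i ∈ σ then -c else c with hβ
  set M : AddMonoidAlgebra ℂ (Fin D → ℤ) := AddMonoidAlgebra.single β 1 with hMdef
  have hM : M ≠ 0 := by
    rw [hMdef]
    exact AddMonoidAlgebra.single_ne_zero.mpr one_ne_zero
  have hMapp : ∀ γ, (L * M).coeff γ = L.coeff (γ - β) := by
    intro γ
    rw [hMdef, AddMonoidAlgebra.coeff_mul_single_apply, mul_one, sub_eq_add_neg]
  have hsupp : (L * M).coeff.support = L.coeff.support.image (· + β) := by
    ext γ
    rw [Finsupp.mem_support_iff, hMapp, Finset.mem_image]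
    constructor
    · intro h
      exact ⟨γ - β, Finsupp.mem_support_iff.mpr h, sub_add_cancel γ β⟩
    · rintro ⟨a, ha, rfl⟩
      simpa [add_sub_cancel_right] using Finsupp.mem_support_iff.mp ha
  have hlongM : longitude M = ∑ i, (β i).natAbs := by
    unfold longitude
    rw [hMdef]
    rw [show (AddMonoidAlgebra.single β (1:ℂ)).coeff.support = {β} from
      Finsupp.support_single_ne_zero β one_ne_zero]
    exact Finset.sup_singleton
  have hlongLM : longitude (L * M) = L.coeff.support.sup (fun a => ∑ i, ((a + β) i).natAbs) := by
    unfold longitude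
    rw [hsupp, Finset.sup_image]
    rfl
  obtain ⟨a, haL, hasup⟩ := Finset.exists_mem_eq_sup L.coeff.support
    (Finsupp.support_nonempty_iff.mpr (AddMonoidAlgebra.coeff_eq_zero.not.mpr hL)) (fun a => ∑ i, ((a + β) i).natAbs)
  have hkey : ∑ i, ((a + β) i).natAbs = longitude L + ∑ i, (β i).natAbs := by
    rw [← hasup, ← hlongLM, hnice M hM, hlongM]
  have htri : ∀ i, ((a + β) i).natAbs ≤ (a i).natAbs + (β i).natAbs := fun i =>
    Int.natAbs_add_le _ _
  have hsum_le : ∑ i, (a i).natAbs ≤ longitude L := le_longitude haL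
  have hle2 : ∑ i, ((a + β) i).natAbs ≤ ∑ i, ((a i).natAbs + (β i).natAbs) :=
    Finset.sum_le_sum fun i _ => htri i
  have hdistrib : ∑ i, ((a i).natAbs + (β i).natAbs)
      = (∑ i, (a i).natAbs) + ∑ i, (β i).natAbs := Finset.sum_add_distrib
  have hEq : ∑ i, ((a + β) i).natAbs = ∑ i, ((a i).natAbs + (β i).natAbs) := by omega
  have hEqterm : ∀ i, ((a + β) i).natAbs = (a i).natAbs + (β i).natAbs := fun i =>
    (Finset.sum_eq_sum_iff_of_le fun i _ => htri i).mp hEq i (Finset.mem_univ i)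
  have hsum_eq : ∑ i, (a i).natAbs = longitude L := by omega
  have hcoord : ∀ i, (a i).natAbs ≤ longitude L := fun i =>
    le_trans (Finset.single_le_sum (f := fun i => (a i).natAbs)
      (fun _ _ => Nat.zero_le _) (Finset.mem_univ i)) (by rw [hsum_eq])
  refine ⟨a, haL, fun i hi => ?_, fun i hi => ?_, hsum_eq⟩
  · have hβi : β i = -c := by rw [hβ]; simp [hi]
    have h5 := hEqterm i
    rw [Pi.add_apply, hβi] at h5
    have h6 := hcoord i
    omega
  · have hβi : β i = c := by rw [hβ]; simp [hi]
    have h5 := hEqterm i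
    rw [Pi.add_apply, hβi] at h5
    have h6 := hcoord i
    omega

end NiceAux

/-- A nonzero Laurent polynomial `L` is nice — `ℓ(LM) = ℓ(L) + ℓ(M)` for every nonzero Laurent
polynomial `M` — if and only if for every subset `σ ⊆ {1,…,D}` the intersection of the Newton
polytope `NP(L)` with the closed orthant determined by `σ` (coordinates in `σ` nonpositive,
coordinates outside `σ` nonnegative) contains a point of ℓ¹-norm equal to `ℓ(L)`. -/
theorem nice_iff_orthant (D : ℕ) (L : AddMonoidAlgebra ℂ (Fin D → ℤ)) (hL : L ≠ 0) :
    (∀ M : AddMonoidAlgebra ℂ (Fin D → ℤ), M ≠ 0 →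
        longitude (L * M) = longitude L + longitude M) ↔
      ∀ σ : Finset (Fin D), ∃ x ∈ newtonPolytope D L,
        (∀ i, i ∈ σ → x i ≤ 0) ∧ (∀ i, i ∉ σ → 0 ≤ x i) ∧
          (∑ i, |x i|) = (longitude L : ℝ) := by
  constructor
  · intro hnice σ
    obtain ⟨a, haL, ha1, ha2, ha3⟩ := NiceAux.orth_of_nice L hL hnice σ
    refine ⟨fun i => (a i : ℝ), ?_, fun i hi => ?_, fun i hi => ?_, ?_⟩
    · exact subset_convexHull ℝ _ (Set.mem_image_of_mem _ (Finset.mem_coe.mpr haL))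
    · show ((a i : ℝ)) ≤ 0
      exact_mod_cast ha1 i hi
    · show (0:ℝ) ≤ (a i : ℝ)
      exact_mod_cast ha2 i hi
    · rw [← ha3]
      push_cast [Nat.cast_natAbs, Int.cast_abs]
      rfl
  · intro horth M hM
    refine NiceAux.nice_of_orth L hL (fun σ => ?_) M hM
    obtain ⟨x, hx, h1, h2, h3⟩ := horth σ
    exact NiceAux.exists_lattice σ L x hx h1 h2 h3
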